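/- Let n ∈ (0,3), k > 0, and let g(ϱ,μ) be real-analytic in a neighborhood of (0,0) with g(0,0) = 0, ∂_ϱ g(0,0) = 0, and ∂_μ g(0,0) = 0. Suppose μ₁, μ₂ : (0,ε) → ℝ are continuously differentiable, (H^{3−n}, μ_j(H)) lies in the domain of analyticity of g, both satisfy H·μ_j'(H) − μ_j(H) = g(H^{3−n}, μ_j(H)) − (2/(3k³(3−n)))·H^{3−n} on (0,ε), and H^{−δ}·μ_j(H) → 0 as H ↓ 0 for some δ > 0, for j = 1, 2. Then there exists β ∈ ℝ such that, as H ↓ 0: μ₁(H) − μ₂(H) = βH·(1 + O(H)) if 0 < n < 2, μ₁(H) − μ₂(H) = βH·(1 + O(−H·ln H)) if n = 2, and μ₁(H) − μ₂(H) = βH·(1 + O(H^{3−n})) if 2 < n < 3. -/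

import Mathlib

/-!
Write `v = μ / H`, so that the equation reads `v' = (g (H ^ (3 - n), μ) - c H ^ (3 - n)) / H ^ 2`
with `c = 2 / (3 k ^ 3 (3 - n))`.
Since `g` vanishes to second order and `|μ| ≤ H ^ δ`, a solution satisfies
`|v'| ≲ H ^ (1 - n) + H ^ (δ - 1) |v|`; the coefficient of `|v|` is integrable at `0`, so it can be
absorbed, and `|μ| ≲ H (1 + |∫ H ^ (1 - n)|)`, i.e. `H`, `H (1 + |log H|)` or `H ^ (3 - n)`.
For two solutions, `w = (μ₁ - μ₂) / H` then obeys `|w'| ≤ Φ' |w|` with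
`Φ' ≲ (H ^ (3 - n) + |μ₁| + |μ₂|) / H` integrable at `0`. Hence `w` is bounded, `|w'| ≲ Φ'`, and
`w` has a limit `β` with `|w - β| ≲ Φ`, where `Φ` is `H`, `-H log H` or `H ^ (3 - n)`.
-/

open Filter Topology Set Asymptotics

/-- Partial derivative of a function of two real variables in the first variable. -/
noncomputable def pd1 (f : ℝ → ℝ → ℝ) (a b : ℝ) : ℝ := deriv (fun x => f x b) a

/-- Partial derivative of a function of two real variables in the second variable. -/
noncomputable def pd2 (f : ℝ → ℝ → ℝ) (a b : ℝ) : ℝ := deriv (fun y => f a y) b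

lemma abs_sub_le_sub_of_abs_deriv_le {f f' F F' : ℝ → ℝ} {a b : ℝ} (hab : a ≤ b)
    (hf : ∀ s ∈ Icc a b, HasDerivAt f (f' s) s) (hF : ∀ s ∈ Icc a b, HasDerivAt F (F' s) s)
    (hbd : ∀ s ∈ Icc a b, |f' s| ≤ F' s) :
    |f b - f a| ≤ F b - F a := by
  have hIco : Ico a b ⊆ Icc a b := Ico_subset_Icc_self
  refine image_norm_le_of_norm_deriv_right_le_deriv_boundary' (f := fun s => f s - f a)
    (B := fun s => F s - F a) (fun s hs => ((hf s hs).sub_const _).continuousAt.continuousWithinAt)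
    (fun s hs => ((hf s (hIco hs)).sub_const _).hasDerivWithinAt) (by simp)
    (fun s hs => ((hF s hs).sub_const _).continuousAt.continuousWithinAt)
    (fun s hs => ((hF s (hIco hs)).sub_const _).hasDerivWithinAt)
    (fun s hs => hbd s (hIco hs)) ⟨hab, le_rfl⟩

lemma le_of_hasDerivAt_nonneg_Icc {F F' : ℝ → ℝ} {a b : ℝ} (hab : a ≤ b)
    (hF : ∀ s ∈ Icc a b, HasDerivAt F (F' s) s) (hF' : ∀ s ∈ Icc a b, 0 ≤ F' s) :
    F a ≤ F b :=
  sub_nonneg.1 <| (abs_nonneg _).trans <|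
    abs_sub_le_sub_of_abs_deriv_le hab hF hF fun s hs => (abs_of_nonneg (hF' s hs)).le

lemma exists_abs_sub_le_of_abs_sub_le_sub {v F : ℝ → ℝ} {a b : ℝ} (hab : a < b)
    (hvF : ∀ s ∈ Ioc a b, ∀ t ∈ Ioc a b, s ≤ t → |v t - v s| ≤ F t - F s)
    (hF0 : Tendsto F (𝓝[>] a) (𝓝 0)) :
    ∃ β, ∀ s ∈ Ioc a b, |v s - β| ≤ F s := by
  -- `v + F` increases and `v - F` decreases; both tend to the limit `β` of `v`.
  have hup : MonotoneOn (v + F) (Ioc a b) := fun s hs t ht hst => by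
    have := hvF s hs t ht hst
    simp only [Pi.add_apply]; linarith [neg_abs_le (v t - v s)]
  have hdown : AntitoneOn (v - F) (Ioc a b) := fun s hs t ht hst => by
    have := hvF s hs t ht hst
    simp only [Pi.sub_apply]; linarith [le_abs_self (v t - v s)]
  have hF_nonneg : ∀ s ∈ Ioc a b, 0 ≤ F s := fun s hs => le_of_tendsto hF0 <| by
    filter_upwards [Ioo_mem_nhdsGT hs.1] with t ht
    linarith [hvF t ⟨ht.1, ht.2.le.trans hs.2⟩ s hs ht.2.le, abs_nonneg (v s - v t)]
  have hlim := (hup.mono Ioo_subset_Ioc_self).tendsto_nhdsWithin_Ioo_right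
    (nonempty_Ioo.2 hab) ⟨(v - F) b, by
      rintro _ ⟨t, ht, rfl⟩
      have := hdown (Ioo_subset_Ioc_self ht) ⟨hab, le_rfl⟩ ht.2.le
      have := hF_nonneg t (Ioo_subset_Ioc_self ht)
      simp only [Pi.add_apply, Pi.sub_apply] at *; linarith⟩
  set β := sInf ((v + F) '' Ioo a b)
  have hlim' : Tendsto (v - F) (𝓝[>] a) (𝓝 β) := by
    have := hlim.sub (hF0.const_mul 2)
    rw [mul_zero, sub_zero] at this
    exact this.congr fun t => by simp only [Pi.add_apply, Pi.sub_apply]; ring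
  refine ⟨β, fun s hs => ?_⟩
  have h1 : β ≤ (v + F) s := le_of_tendsto hlim <| by
    filter_upwards [Ioo_mem_nhdsGT hs.1] with t ht
    exact hup ⟨ht.1, ht.2.le.trans hs.2⟩ hs ht.2.le
  have h2 : (v - F) s ≤ β := ge_of_tendsto hlim' <| by
    filter_upwards [Ioo_mem_nhdsGT hs.1] with t ht
    exact hdown ⟨ht.1, ht.2.le.trans hs.2⟩ hs ht.2.le
  simp only [Pi.add_apply, Pi.sub_apply] at h1 h2
  exact abs_sub_le_iff.2 ⟨by linarith, by linarith⟩

lemma exists_abs_sub_le_of_abs_deriv_le {v v' F F' : ℝ → ℝ} {a : ℝ}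
    (hv : ∀ᶠ s in 𝓝[>] a, HasDerivAt v (v' s) s) (hF : ∀ᶠ s in 𝓝[>] a, HasDerivAt F (F' s) s)
    (hbd : ∀ᶠ s in 𝓝[>] a, |v' s| ≤ F' s) (hF0 : Tendsto F (𝓝[>] a) (𝓝 0)) :
    ∃ β, ∀ᶠ s in 𝓝[>] a, |v s - β| ≤ F s := by
  obtain ⟨b, hab, hb⟩ := mem_nhdsGT_iff_exists_Ioc_subset.1 (hv.and (hF.and hbd))
  obtain ⟨β, hβ⟩ := exists_abs_sub_le_of_abs_sub_le_sub hab (fun s hs t ht hst => by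
    have hsub : Icc s t ⊆ Ioc a b := fun u hu => ⟨hs.1.trans_le hu.1, hu.2.trans ht.2⟩
    exact abs_sub_le_sub_of_abs_deriv_le hst (fun u hu => (hb (hsub hu)).1)
      (fun u hu => (hb (hsub hu)).2.1) (fun u hu => (hb (hsub hu)).2.2)) hF0
  exact ⟨β, Filter.mem_of_superset (Ioc_mem_nhdsGT hab) hβ⟩

lemma abs_le_of_abs_deriv_le_add_mul_abs {v v' A A' φ φ' : ℝ → ℝ} {a b : ℝ} (hab : a ≤ b)
    (hv : ∀ s ∈ Icc a b, HasDerivAt v (v' s) s) (hA : ∀ s ∈ Icc a b, HasDerivAt A (A' s) s)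
    (hφ : ∀ s ∈ Icc a b, HasDerivAt φ (φ' s) s) (hA' : ∀ s ∈ Icc a b, 0 ≤ A' s)
    (hφ' : ∀ s ∈ Icc a b, 0 ≤ φ' s) (hbd : ∀ s ∈ Icc a b, |v' s| ≤ A' s + φ' s * |v s|)
    (hφab : φ b - φ a ≤ 1 / 2) :
    |v a| ≤ 2 * (|v b| + (A b - A a)) := by
  -- Bound `|v'|` by `A' + M φ'` with `M` the maximum of `|v|`; the `M φ'` part then costs at most
  -- `M / 2` and can be absorbed.
  obtain ⟨s, hs, hmax⟩ := isCompact_Icc.exists_isMaxOn (nonempty_Icc.2 hab)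
    (fun t ht => (hv t ht).continuousAt.continuousWithinAt.abs)
  have hsub : Icc s b ⊆ Icc a b := Icc_subset_Icc_left hs.1
  have hsub' : Icc a s ⊆ Icc a b := Icc_subset_Icc_right hs.2
  have hvs := abs_sub_le_sub_of_abs_deriv_le (F := fun t => A t + |v s| * φ t) hs.2
    (fun t ht => hv t (hsub ht)) (fun t ht => (hA t (hsub ht)).add ((hφ t (hsub ht)).const_mul _))
    (fun t ht => (hbd t (hsub ht)).trans <| by
      have := mul_le_mul_of_nonneg_left (hmax (hsub ht)) (hφ' t (hsub ht))
      simp only at this; linarith)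
  have hAs := le_of_hasDerivAt_nonneg_Icc hs.1 (fun t ht => hA t (hsub' ht))
    (fun t ht => hA' t (hsub' ht))
  have hφs := le_of_hasDerivAt_nonneg_Icc hs.1 (fun t ht => hφ t (hsub' ht))
    (fun t ht => hφ' t (hsub' ht))
  have hva : |v a| ≤ |v s| := hmax ⟨le_rfl, hab⟩
  have hM : |v s| * (φ b - φ s) ≤ |v s| / 2 :=
    (mul_le_mul_of_nonneg_left (show φ b - φ s ≤ 1 / 2 by linarith) (abs_nonneg _)).trans_eq
      (by ring)
  linarith [abs_sub_abs_le_abs_sub (v s) (v b), abs_sub_comm (v b) (v s)]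

lemma isBigO_one_add_abs_of_abs_deriv_le_add_mul_abs {v v' A A' φ φ' : ℝ → ℝ} {a : ℝ}
    (hv : ∀ᶠ s in 𝓝[>] a, HasDerivAt v (v' s) s) (hA : ∀ᶠ s in 𝓝[>] a, HasDerivAt A (A' s) s)
    (hφ : ∀ᶠ s in 𝓝[>] a, HasDerivAt φ (φ' s) s) (hA' : ∀ᶠ s in 𝓝[>] a, 0 ≤ A' s)
    (hφ' : ∀ᶠ s in 𝓝[>] a, 0 ≤ φ' s) (hbd : ∀ᶠ s in 𝓝[>] a, |v' s| ≤ A' s + φ' s * |v s|)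
    (hφ0 : Tendsto φ (𝓝[>] a) (𝓝 0)) :
    v =O[𝓝[>] a] fun s => 1 + |A s| := by
  have hφ_small : ∀ᶠ s in 𝓝[>] a, |φ s| ≤ 1 / 4 :=
    hφ0.abs.eventually (ge_mem_nhds (by norm_num : |(0 : ℝ)| < 1 / 4))
  obtain ⟨b, hab, hb⟩ := mem_nhdsGT_iff_exists_Ioc_subset.1
    (hv.and <| hA.and <| hφ.and <| hA'.and <| hφ'.and <| hbd.and hφ_small)
  have hab : a < b := hab
  refine .of_bound (2 * (|v b| + |A b|) + 2) ?_
  filter_upwards [Ioc_mem_nhdsGT hab] with s hs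
  have hsub : Icc s b ⊆ Ioc a b := fun t ht => ⟨hs.1.trans_le ht.1, ht.2⟩
  have hb' : ∀ t ∈ Icc s b, HasDerivAt v (v' t) t ∧ HasDerivAt A (A' t) t ∧
      HasDerivAt φ (φ' t) t ∧ 0 ≤ A' t ∧ 0 ≤ φ' t ∧ |v' t| ≤ A' t + φ' t * |v t| ∧ |φ t| ≤ 1 / 4 :=
    fun t ht => hb (hsub ht)
  simp only [imp_and, forall_and] at hb'
  obtain ⟨hv', hA', hφ', hA'', hφ'', hbd', -⟩ := hb'
  have key := abs_le_of_abs_deriv_le_add_mul_abs hs.2 hv' hA' hφ' hA'' hφ'' hbd' (by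
    linarith [le_abs_self (φ b), neg_abs_le (φ s), (hb ⟨hab, le_rfl⟩).2.2.2.2.2.2,
      (hb hs).2.2.2.2.2.2])
  rw [Real.norm_eq_abs, Real.norm_eq_abs, abs_of_nonneg (by positivity : 0 ≤ 1 + |A s|)]
  nlinarith [le_abs_self (A b), neg_abs_le (A s), abs_nonneg (v b), abs_nonneg (A b),
    abs_nonneg (A s)]

lemma exists_isBigO_sub_of_abs_deriv_le_mul_abs {v v' φ φ' : ℝ → ℝ} {a : ℝ}
    (hv : ∀ᶠ s in 𝓝[>] a, HasDerivAt v (v' s) s) (hφ : ∀ᶠ s in 𝓝[>] a, HasDerivAt φ (φ' s) s)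
    (hφ' : ∀ᶠ s in 𝓝[>] a, 0 ≤ φ' s) (hbd : ∀ᶠ s in 𝓝[>] a, |v' s| ≤ φ' s * |v s|)
    (hφ0 : Tendsto φ (𝓝[>] a) (𝓝 0)) :
    ∃ β, (fun s => v s - β) =O[𝓝[>] a] φ := by
  obtain ⟨B, hB0, hB⟩ := (isBigO_one_add_abs_of_abs_deriv_le_add_mul_abs hv (A := 0) (A' := 0)
    (.of_forall fun s => hasDerivAt_const s 0) hφ (.of_forall fun _ => le_rfl) hφ'
    (by simpa using hbd) hφ0).exists_nonneg
  obtain ⟨β, hβ⟩ := exists_abs_sub_le_of_abs_deriv_le hv (hφ.mono fun s h => h.const_mul B)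
    (F' := fun s => B * φ' s) (by
      filter_upwards [hbd, hB.bound, hφ'] with s hbds hBs hφ's
      simp only [Pi.zero_apply, abs_zero, add_zero, norm_one, Real.norm_eq_abs, mul_one] at hBs
      exact hbds.trans (by rw [mul_comm]; gcongr))
    (by simpa using hφ0.const_mul B)
  refine ⟨β, .of_bound B ?_⟩
  filter_upwards [hβ] with s hs
  exact hs.trans (mul_le_mul_of_nonneg_left (le_abs_self _) hB0)

lemma fderiv_uncurry_eq_zero {g : ℝ → ℝ → ℝ} {a b : ℝ}
    (hg : DifferentiableAt ℝ (fun p : ℝ × ℝ => g p.1 p.2) (a, b))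
    (h1 : pd1 g a b = 0) (h2 : pd2 g a b = 0) :
    fderiv ℝ (fun p : ℝ × ℝ => g p.1 p.2) (a, b) = 0 := by
  refine ContinuousLinearMap.prod_ext (ContinuousLinearMap.ext_ring ?_)
    (ContinuousLinearMap.ext_ring ?_)
  · have h := (hg.hasFDerivAt.comp_hasDerivAt a
      ((hasDerivAt_id a).prodMk (hasDerivAt_const a b))).deriv
    exact h.symm.trans h1
  · have h := (hg.hasFDerivAt.comp_hasDerivAt b
      ((hasDerivAt_const b a).prodMk (hasDerivAt_id b))).deriv
    exact h.symm.trans h2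

lemma exists_norm_sub_le_of_fderiv_eq_zero {E F : Type*} [NormedAddCommGroup E] [NormedSpace ℝ E]
    [NormedAddCommGroup F] [NormedSpace ℝ F] {f : E → F} (hf : ContDiffAt ℝ 2 f 0)
    (hf' : fderiv ℝ f 0 = 0) :
    ∃ K ≥ (0 : ℝ), ∃ r > (0 : ℝ), ∀ x ∈ Metric.closedBall (0 : E) r,
      ∀ y ∈ Metric.closedBall (0 : E) r, ‖f x - f y‖ ≤ K * (‖x‖ + ‖y‖) * ‖x - y‖ := by
  obtain ⟨K, t, ht, hlip⟩ := (hf.fderiv_right (m := 1) le_rfl).exists_lipschitzOnWith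
  obtain ⟨r, hr, hball⟩ := Metric.mem_nhds_iff.1
    (inter_mem ht ((hf.eventually (by simp)).mono fun _ h => h.differentiableAt (by simp)))
  have hderiv : ∀ z ∈ Metric.closedBall (0 : E) (r / 2), ‖fderiv ℝ f z‖ ≤ K * ‖z‖ := by
    intro z hz
    have hz' : z ∈ t ∩ _ := hball (Metric.closedBall_subset_ball (by linarith) hz)
    have h0 : (0 : E) ∈ t := mem_of_mem_nhds ht
    simpa [hf'] using hlip.norm_sub_le hz'.1 h0
  refine ⟨K, K.2, r / 2, by positivity, fun x hx y hy => ?_⟩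
  set R := max ‖x‖ ‖y‖
  have hR : Metric.closedBall (0 : E) R ⊆ Metric.closedBall 0 (r / 2) :=
    Metric.closedBall_subset_closedBall (max_le (mem_closedBall_zero_iff.1 hx)
      (mem_closedBall_zero_iff.1 hy))
  have := Convex.norm_image_sub_le_of_norm_fderiv_le (𝕜 := ℝ) (C := K * R)
    (fun z hz => (hball (Metric.closedBall_subset_ball (by linarith) (hR hz))).2)
    (fun z hz => (hderiv z (hR hz)).trans
      (mul_le_mul_of_nonneg_left (mem_closedBall_zero_iff.1 hz) K.2))
    (convex_closedBall 0 R) (mem_closedBall_zero_iff.2 (le_max_right _ _))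
    (mem_closedBall_zero_iff.2 (le_max_left _ _))
  refine this.trans (mul_le_mul_of_nonneg_right (mul_le_mul_of_nonneg_left ?_ K.2) (norm_nonneg _))
  exact max_le_add_of_nonneg (norm_nonneg _) (norm_nonneg _)

lemma tendsto_rpow_nhdsGT_zero {p : ℝ} (hp : 0 < p) :
    Tendsto (fun s : ℝ => s ^ p) (𝓝[>] 0) (𝓝 0) := by
  simpa [Real.zero_rpow hp.ne'] using
    (Real.continuousAt_rpow_const 0 p (.inr hp.le)).tendsto.mono_left nhdsWithin_le_nhds

lemma hasDerivAt_rpow_div {q s : ℝ} (hq : q ≠ 0) (hs : 0 < s) :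
    HasDerivAt (fun u => u ^ q / q) (s ^ (q - 1)) s := by
  have h := (Real.hasDerivAt_rpow_const (p := q) (.inl hs.ne')).div_const q
  rwa [mul_div_cancel_left₀ _ hq] at h

lemma eventually_pos_and_le_one : ∀ᶠ s in 𝓝[>] (0 : ℝ), 0 < s ∧ s ≤ 1 := Ioc_mem_nhdsGT one_pos

lemma eventually_hasDerivAt_div_self {μ R : ℝ → ℝ} {ε : ℝ} (hε : 0 < ε)
    (hμ : ContDiffOn ℝ 1 μ (Ioo 0 ε)) (hode : ∀ s ∈ Ioo (0 : ℝ) ε, s * deriv μ s - μ s = R s) :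
    ∀ᶠ s in 𝓝[>] 0, HasDerivAt (fun u => μ u / u) (R s / s ^ 2) s := by
  filter_upwards [Ioo_mem_nhdsGT hε] with s hs
  have hd := ((hμ.differentiableOn one_ne_zero s hs).differentiableAt
    (isOpen_Ioo.mem_nhds hs)).hasDerivAt
  refine (hd.div (hasDerivAt_id' s) hs.1.ne').congr_deriv ?_
  rw [← hode s hs]; ring

lemma eventually_abs_le_rpow_of_tendsto {μ : ℝ → ℝ} {δ : ℝ}
    (h : Tendsto (fun s => s ^ (-δ) * μ s) (𝓝[>] 0) (𝓝 0)) :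
    ∀ᶠ s in 𝓝[>] 0, |μ s| ≤ s ^ δ := by
  filter_upwards [h.abs.eventually (ge_mem_nhds (by simp : |(0 : ℝ)| < 1)),
    self_mem_nhdsWithin] with s hs (hs0 : 0 < s)
  rw [abs_mul, abs_of_pos (Real.rpow_pos_of_pos hs0 _), Real.rpow_neg hs0.le,
    inv_mul_le_iff₀ (Real.rpow_pos_of_pos hs0 _), mul_one] at hs
  exact hs

lemma abs_sub_mul_rpow_div_sq_le {g : ℝ → ℝ → ℝ} {K r c p δ s y : ℝ} (hp : 0 < p)
    (hK : 0 ≤ K) (hg : ∀ x ∈ Metric.closedBall (0 : ℝ × ℝ) r, ‖g x.1 x.2‖ ≤ K * ‖x‖ ^ 2)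
    (hs : 0 < s) (hs1 : s ≤ 1) (hsp : s ^ p ≤ r) (hy : |y| ≤ s ^ δ) (hyr : |y| ≤ r) :
    |(g (s ^ p) y - c * s ^ p) / s ^ 2| ≤ (K + |c|) * s ^ (p - 2) + K * s ^ (δ - 1) * |y / s| := by
  have hsp0 : 0 < s ^ p := Real.rpow_pos_of_pos hs p
  have hsp1 : s ^ p ≤ 1 := Real.rpow_le_one hs.le hs1 hp.le
  -- `|y| ≤ s ^ δ` turns the quadratic term `y ^ 2` into the linear term `s ^ δ |y|`
  have hx : ‖((s ^ p, y) : ℝ × ℝ)‖ ^ 2 ≤ s ^ p + s ^ δ * |y| := by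
    rw [Prod.norm_mk, Real.norm_eq_abs, Real.norm_eq_abs, abs_of_pos hsp0]
    rcases le_total (s ^ p) |y| with h | h
    · rw [max_eq_right h, sq]; nlinarith [abs_nonneg y]
    · rw [max_eq_left h, sq]; nlinarith [abs_nonneg y, Real.rpow_pos_of_pos hs δ]
  have hgs := hg (s ^ p, y) (mem_closedBall_zero_iff.2 (norm_prod_le_iff.2
    ⟨by rwa [Real.norm_eq_abs, abs_of_pos hsp0], hyr⟩))
  rw [Real.rpow_sub hs, Real.rpow_sub_one hs.ne', Real.rpow_two, abs_div, abs_div,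
    abs_of_pos hs, abs_of_pos (by positivity : (0 : ℝ) < s ^ 2), div_le_iff₀ (by positivity)]
  calc |g (s ^ p) y - c * s ^ p| ≤ K * (s ^ p + s ^ δ * |y|) + |c| * s ^ p := by
        refine (abs_sub _ _).trans (add_le_add ?_ ?_)
        · exact hgs.trans (mul_le_mul_of_nonneg_left hx hK)
        · rw [abs_mul, abs_of_pos hsp0]
    _ = ((K + |c|) * (s ^ p / s ^ 2) + K * (s ^ δ / s) * (|y| / s)) * s ^ 2 := by
        field_simp; ring

lemma isBigO_mul_one_add_abs_of_solution {g : ℝ → ℝ → ℝ} {μ A : ℝ → ℝ} {K r c p δ : ℝ}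
    (hp : 0 < p) (hδ : 0 < δ) (hr : 0 < r) (hK : 0 ≤ K)
    (hg : ∀ x ∈ Metric.closedBall (0 : ℝ × ℝ) r, ‖g x.1 x.2‖ ≤ K * ‖x‖ ^ 2)
    (hv : ∀ᶠ s in 𝓝[>] 0,
      HasDerivAt (fun u => μ u / u) ((g (s ^ p) (μ s) - c * s ^ p) / s ^ 2) s)
    (hμ : ∀ᶠ s in 𝓝[>] 0, |μ s| ≤ s ^ δ)
    (hA : ∀ᶠ s in 𝓝[>] 0, HasDerivAt A (s ^ (p - 2)) s) :
    μ =O[𝓝[>] 0] fun s => s * (1 + |A s|) := by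
  set D := K + |c|
  have hD : 0 ≤ D := by positivity
  have hpos : ∀ᶠ s in 𝓝[>] (0 : ℝ), 0 < s := self_mem_nhdsWithin
  have hbd : ∀ᶠ s in 𝓝[>] (0 : ℝ), |(g (s ^ p) (μ s) - c * s ^ p) / s ^ 2| ≤
      D * s ^ (p - 2) + K * s ^ (δ - 1) * |μ s / s| := by
    filter_upwards [eventually_pos_and_le_one, hμ,
      (tendsto_rpow_nhdsGT_zero hp).eventually (ge_mem_nhds hr),
      (tendsto_rpow_nhdsGT_zero hδ).eventually (ge_mem_nhds hr)] with s ⟨hs, hs1⟩ hμs hsp hsδ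
    exact abs_sub_mul_rpow_div_sq_le hp hK hg hs hs1 hsp hμs (hμs.trans hsδ)
  have hv_bound := isBigO_one_add_abs_of_abs_deriv_le_add_mul_abs hv
    (hA.mono fun s h => h.const_mul D)
    (hpos.mono fun s hs => (hasDerivAt_rpow_div hδ.ne' hs).const_mul K)
    (hpos.mono fun s hs => by have := Real.rpow_pos_of_pos hs (p - 2); positivity)
    (hpos.mono fun s hs => by have := Real.rpow_pos_of_pos hs (δ - 1); positivity)
    hbd (by simpa using ((tendsto_rpow_nhdsGT_zero hδ).div_const δ).const_mul K)
  have hrescale : (fun s => 1 + |D * A s|) =O[𝓝[>] 0] fun s => 1 + |A s| :=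
    isBigO_of_le' (c := 1 + D) _ fun s => by
      rw [abs_mul, abs_of_nonneg hD, Real.norm_eq_abs, Real.norm_eq_abs,
        abs_of_nonneg (by positivity : 0 ≤ 1 + D * |A s|),
        abs_of_nonneg (by positivity : 0 ≤ 1 + |A s|)]
      nlinarith [abs_nonneg (A s)]
  refine ((isBigO_refl (fun s : ℝ => s) _).mul (hv_bound.trans hrescale)).congr' ?_
    (.of_forall fun _ => rfl)
  filter_upwards [hpos] with s hs
  field_simp

lemma abs_sub_div_sq_le {g : ℝ → ℝ → ℝ} {K r M ϱ y₁ y₂ s : ℝ} (hK : 0 ≤ K)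
    (hg : ∀ x ∈ Metric.closedBall (0 : ℝ × ℝ) r, ∀ y ∈ Metric.closedBall (0 : ℝ × ℝ) r,
      ‖g x.1 x.2 - g y.1 y.2‖ ≤ K * (‖x‖ + ‖y‖) * ‖x - y‖) (hs : 0 < s)
    (h₁ : ‖((ϱ, y₁) : ℝ × ℝ)‖ ≤ r) (h₂ : ‖((ϱ, y₂) : ℝ × ℝ)‖ ≤ r)
    (hM₁ : ‖((ϱ, y₁) : ℝ × ℝ)‖ ≤ M) (hM₂ : ‖((ϱ, y₂) : ℝ × ℝ)‖ ≤ M) :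
    |(g ϱ y₁ - g ϱ y₂) / s ^ 2| ≤ 2 * K * (M / s) * |y₁ / s - y₂ / s| := by
  have hgs := hg _ (mem_closedBall_zero_iff.2 h₁) _ (mem_closedBall_zero_iff.2 h₂)
  have hdiff : ‖((ϱ, y₁) : ℝ × ℝ) - (ϱ, y₂)‖ = |y₁ - y₂| := by simp [Prod.norm_def]
  rw [hdiff, Real.norm_eq_abs] at hgs
  rw [← sub_div, abs_div, abs_div, abs_of_pos hs, abs_of_pos (by positivity : (0 : ℝ) < s ^ 2),
    div_le_iff₀ (by positivity)]
  calc |g ϱ y₁ - g ϱ y₂| ≤ K * (2 * M) * |y₁ - y₂| :=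
        hgs.trans (mul_le_mul_of_nonneg_right (mul_le_mul_of_nonneg_left (by linarith) hK)
          (abs_nonneg _))
    _ = 2 * K * (M / s) * (|y₁ - y₂| / s) * s ^ 2 := by field_simp

lemma exists_isBigO_sub_of_solutions {g : ℝ → ℝ → ℝ} {μ₁ μ₂ m Φ Φ' : ℝ → ℝ} {K r c p : ℝ}
    (hp : 0 < p) (hr : 0 < r) (hK : 0 ≤ K)
    (hg : ∀ x ∈ Metric.closedBall (0 : ℝ × ℝ) r, ∀ y ∈ Metric.closedBall (0 : ℝ × ℝ) r,
      ‖g x.1 x.2 - g y.1 y.2‖ ≤ K * (‖x‖ + ‖y‖) * ‖x - y‖)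
    (hv₁ : ∀ᶠ s in 𝓝[>] 0,
      HasDerivAt (fun u => μ₁ u / u) ((g (s ^ p) (μ₁ s) - c * s ^ p) / s ^ 2) s)
    (hv₂ : ∀ᶠ s in 𝓝[>] 0,
      HasDerivAt (fun u => μ₂ u / u) ((g (s ^ p) (μ₂ s) - c * s ^ p) / s ^ 2) s)
    (hμ₁ : Tendsto μ₁ (𝓝[>] 0) (𝓝 0)) (hμ₂ : Tendsto μ₂ (𝓝[>] 0) (𝓝 0))
    (hm₁ : μ₁ =O[𝓝[>] 0] m) (hm₂ : μ₂ =O[𝓝[>] 0] m) (hpm : (fun s => s ^ p) =O[𝓝[>] 0] m)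
    (hΦ : ∀ᶠ s in 𝓝[>] 0, HasDerivAt Φ (Φ' s) s) (hmΦ : ∀ᶠ s in 𝓝[>] 0, |m s| / s ≤ Φ' s)
    (hΦ0 : Tendsto Φ (𝓝[>] 0) (𝓝 0)) :
    ∃ β, (fun s => μ₁ s - μ₂ s - β * s) =O[𝓝[>] 0] fun s => s * Φ s := by
  obtain ⟨C₁, hC₁, h₁⟩ := hm₁.exists_nonneg
  obtain ⟨C₂, hC₂, h₂⟩ := hm₂.exists_nonneg
  obtain ⟨C₃, hC₃, h₃⟩ := hpm.exists_nonneg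
  set C := C₁ + C₂ + C₃
  have hpos : ∀ᶠ s in 𝓝[>] (0 : ℝ), 0 < s := self_mem_nhdsWithin
  have hΦ'0 : ∀ᶠ s in 𝓝[>] (0 : ℝ), 0 ≤ Φ' s := by
    filter_upwards [hpos, hmΦ] with s hs h
    exact (div_nonneg (abs_nonneg _) hs.le).trans h
  have hr' : ∀ {f : ℝ → ℝ}, Tendsto f (𝓝[>] 0) (𝓝 0) → ∀ᶠ s in 𝓝[>] 0, ‖f s‖ ≤ r :=
    fun hf => by simpa using hf.norm.eventually (ge_mem_nhds (by simpa using hr))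
  have hw : ∀ᶠ s in 𝓝[>] (0 : ℝ), HasDerivAt (fun u => μ₁ u / u - μ₂ u / u)
      ((g (s ^ p) (μ₁ s) - g (s ^ p) (μ₂ s)) / s ^ 2) s :=
    (hv₁.and hv₂).mono fun s h => (h.1.sub h.2).congr_deriv (by ring)
  have hbd : ∀ᶠ s in 𝓝[>] (0 : ℝ), |(g (s ^ p) (μ₁ s) - g (s ^ p) (μ₂ s)) / s ^ 2| ≤
      2 * K * C * Φ' s * |μ₁ s / s - μ₂ s / s| := by
    filter_upwards [hpos, hmΦ, h₁.bound, h₂.bound, h₃.bound, hr' hμ₁, hr' hμ₂,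
      hr' (tendsto_rpow_nhdsGT_zero hp)] with s hs hmΦs h₁s h₂s h₃s hr₁ hr₂ hrp
    have hx : ∀ y : ℝ, ‖y‖ ≤ C * ‖m s‖ → ‖((s ^ p, y) : ℝ × ℝ)‖ ≤ C * ‖m s‖ :=
      fun y hy => norm_prod_le_iff.2 ⟨h₃s.trans (by gcongr; linarith), hy⟩
    refine (abs_sub_div_sq_le hK hg hs (norm_prod_le_iff.2 ⟨hrp, hr₁⟩)
      (norm_prod_le_iff.2 ⟨hrp, hr₂⟩) (hx _ (h₁s.trans (by gcongr; linarith)))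
      (hx _ (h₂s.trans (by gcongr; linarith)))).trans ?_
    rw [Real.norm_eq_abs, mul_div_assoc, ← mul_assoc (2 * K)]
    gcongr
  obtain ⟨β, hβ⟩ := exists_isBigO_sub_of_abs_deriv_le_mul_abs hw
    (hΦ.mono fun s h => h.const_mul (2 * K * C)) (hΦ'0.mono fun s h => by positivity) hbd
    (by simpa using hΦ0.const_mul (2 * K * C))
  refine ⟨β, ((isBigO_refl (fun s : ℝ => s) _).mul
    (hβ.trans (isBigO_const_mul_self _ _ _))).congr' ?_ (.of_forall fun _ => rfl)⟩
  filter_upwards [hpos] with s hs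
  field_simp

lemma eventually_hasDerivAt_rpow_sub_one_div {p : ℝ} (hp : p ≠ 1) :
    ∀ᶠ s in 𝓝[>] (0 : ℝ), HasDerivAt (fun u => u ^ (p - 1) / (p - 1)) (s ^ (p - 2)) s := by
  filter_upwards [self_mem_nhdsWithin] with s hs
  simpa [sub_sub, one_add_one_eq_two] using hasDerivAt_rpow_div (sub_ne_zero.2 hp) hs

lemma mul_one_add_abs_rpow_div_isBigO {q : ℝ} (hq : 0 < q) :
    (fun s => s * (1 + |s ^ q / q|)) =O[𝓝[>] 0] fun s => s := by
  have h : Tendsto (fun s : ℝ => 1 + |s ^ q / q|) (𝓝[>] 0) (𝓝 (1 + |0 / q|)) :=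
    tendsto_const_nhds.add ((tendsto_rpow_nhdsGT_zero hq).div_const q).abs
  simpa using (isBigO_refl (fun s : ℝ => s) _).mul (h.isBigO_one ℝ)

lemma mul_one_add_abs_rpow_div_isBigO_of_neg {q : ℝ} (hq : q < 0) :
    (fun s => s * (1 + |s ^ q / q|)) =O[𝓝[>] 0] fun s => s ^ (q + 1) := by
  refine .of_bound (1 - 1 / q) ?_
  filter_upwards [eventually_pos_and_le_one] with s ⟨hs, hs1⟩
  have h1 : s ≤ s ^ (q + 1) := by
    simpa using Real.rpow_le_rpow_of_exponent_ge hs hs1 (by linarith : q + 1 ≤ 1)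
  have h2 : s * s ^ q = s ^ (q + 1) := by
    rw [Real.rpow_add_one hs.ne', mul_comm]
  rw [Real.norm_eq_abs, Real.norm_eq_abs, abs_of_pos (by positivity),
    abs_of_pos (Real.rpow_pos_of_pos hs _), abs_div, abs_of_pos (Real.rpow_pos_of_pos hs _),
    abs_of_neg hq, mul_add, mul_one, ← mul_div_assoc, h2]
  have := Real.rpow_pos_of_pos hs (q + 1)
  have : s ^ (q + 1) / -q = -(1 / q) * s ^ (q + 1) := by field_simp
  nlinarith

lemma rpow_isBigO_self {p : ℝ} (hp : 1 ≤ p) : (fun s : ℝ => s ^ p) =O[𝓝[>] 0] fun s => s := by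
  refine .of_bound 1 ?_
  filter_upwards [eventually_pos_and_le_one] with s ⟨hs, hs1⟩
  rw [Real.norm_eq_abs, Real.norm_eq_abs, abs_of_pos (Real.rpow_pos_of_pos hs _), abs_of_pos hs,
    one_mul]
  simpa using Real.rpow_le_rpow_of_exponent_ge hs hs1 hp

lemma self_isBigO_mul_one_add_abs (f : ℝ → ℝ) (l : Filter ℝ) :
    (fun s : ℝ => s) =O[l] fun s => s * (1 + |f s|) :=
  isBigO_of_le' (c := 1) l fun s => by
    rw [norm_mul, one_mul, Real.norm_eq_abs (1 + _), abs_of_nonneg (by positivity)]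
    exact le_mul_of_one_le_right (norm_nonneg _) (by simp)

lemma hasDerivAt_mul_two_sub_log {s : ℝ} (hs : s ≠ 0) :
    HasDerivAt (fun u => u * (2 - Real.log u)) (1 - Real.log s) s := by
  refine ((hasDerivAt_id' s).mul ((Real.hasDerivAt_log hs).const_sub 2)).congr_deriv ?_
  field_simp; ring

lemma tendsto_mul_two_sub_log : Tendsto (fun s => s * (2 - Real.log s)) (𝓝[>] 0) (𝓝 0) := by
  have h : Tendsto (fun s : ℝ => 2 * s - s * Real.log s) (𝓝 0) (𝓝 0) :=
    ((continuous_const_mul (2 : ℝ)).sub Real.continuous_mul_log).tendsto' 0 0 (by simp)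
  exact (h.mono_left nhdsWithin_le_nhds).congr fun s => by ring

lemma mul_two_sub_log_isBigO :
    (fun s => s * (2 - Real.log s)) =O[𝓝[>] 0] fun s => -(s * Real.log s) := by
  refine .of_bound 3 ?_
  filter_upwards [Ioo_mem_nhdsGT (Real.exp_pos (-1))] with s ⟨hs, hse⟩
  have hlog : Real.log s < -1 := by simpa using Real.log_lt_log hs hse
  rw [Real.norm_eq_abs, Real.norm_eq_abs, abs_of_pos (by nlinarith), abs_of_pos (by nlinarith)]
  nlinarith

/-- `Φ` majorizes `∫₀ˢ m t / t dt` for a weight `m` dominating both `s ^ p` and `s (1 + |A s|)`,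
where `A' = s ^ (p - 2)`; the latter is the a priori size of small solutions, by
`isBigO_mul_one_add_abs_of_solution`. -/
def IsDifferenceRate (p : ℝ) (Φ : ℝ → ℝ) : Prop :=
  ∃ A m Φ' : ℝ → ℝ, (∀ᶠ s in 𝓝[>] 0, HasDerivAt A (s ^ (p - 2)) s) ∧
    (fun s => s * (1 + |A s|)) =O[𝓝[>] 0] m ∧ (fun s => s ^ p) =O[𝓝[>] 0] m ∧
    (∀ᶠ s in 𝓝[>] 0, HasDerivAt Φ (Φ' s) s) ∧ (∀ᶠ s in 𝓝[>] 0, |m s| / s ≤ Φ' s) ∧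
    Tendsto Φ (𝓝[>] 0) (𝓝 0)

lemma isDifferenceRate_id {p : ℝ} (hp : 1 < p) : IsDifferenceRate p fun s => s := by
  refine ⟨_, fun s => s, fun _ => 1, eventually_hasDerivAt_rpow_sub_one_div hp.ne',
    mul_one_add_abs_rpow_div_isBigO (by linarith), rpow_isBigO_self hp.le,
    .of_forall hasDerivAt_id', ?_, tendsto_id.mono_left nhdsWithin_le_nhds⟩
  filter_upwards [self_mem_nhdsWithin] with s (hs : 0 < s)
  rw [abs_of_pos hs, div_self hs.ne']

lemma isDifferenceRate_mul_two_sub_log : IsDifferenceRate 1 fun s => s * (2 - Real.log s) := by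
  refine ⟨Real.log, fun s => s * (1 + |Real.log s|), fun s => 1 - Real.log s, ?_,
    isBigO_refl _ _, by simpa using self_isBigO_mul_one_add_abs Real.log _, ?_, ?_,
    tendsto_mul_two_sub_log⟩
  · filter_upwards [self_mem_nhdsWithin] with s (hs : 0 < s)
    norm_num [Real.rpow_neg_one]
    exact Real.hasDerivAt_log hs.ne'
  · filter_upwards [self_mem_nhdsWithin] with s (hs : 0 < s)
    exact hasDerivAt_mul_two_sub_log hs.ne'
  · filter_upwards [eventually_pos_and_le_one] with s ⟨hs, hs1⟩
    rw [abs_of_pos (by positivity), abs_of_nonpos (Real.log_nonpos hs.le hs1),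
      mul_div_cancel_left₀ _ hs.ne', sub_eq_add_neg]

lemma isDifferenceRate_rpow_div {p : ℝ} (hp : 0 < p) (hp1 : p < 1) :
    IsDifferenceRate p fun s => s ^ p / p := by
  refine ⟨_, fun s => s ^ p, fun s => s ^ (p - 1), eventually_hasDerivAt_rpow_sub_one_div hp1.ne,
    by simpa using mul_one_add_abs_rpow_div_isBigO_of_neg (q := p - 1) (by linarith),
    isBigO_refl _ _, ?_, ?_, by simpa using (tendsto_rpow_nhdsGT_zero hp).div_const p⟩
  · filter_upwards [self_mem_nhdsWithin] with s (hs : 0 < s)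
    exact hasDerivAt_rpow_div hp.ne' hs
  · filter_upwards [self_mem_nhdsWithin] with s (hs : 0 < s)
    rw [abs_of_pos (Real.rpow_pos_of_pos hs _), Real.rpow_sub_one hs.ne']

lemma exists_isBigO_sub_of_isDifferenceRate {g : ℝ → ℝ → ℝ} {μ₁ μ₂ : ℝ → ℝ} {K r c p : ℝ}
    (hp : 0 < p) (hr : 0 < r) (hK : 0 ≤ K)
    (hg : ∀ x ∈ Metric.closedBall (0 : ℝ × ℝ) r, ∀ y ∈ Metric.closedBall (0 : ℝ × ℝ) r,
      ‖g x.1 x.2 - g y.1 y.2‖ ≤ K * (‖x‖ + ‖y‖) * ‖x - y‖) (hg0 : g 0 0 = 0)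
    (hv₁ : ∀ᶠ s in 𝓝[>] 0,
      HasDerivAt (fun u => μ₁ u / u) ((g (s ^ p) (μ₁ s) - c * s ^ p) / s ^ 2) s)
    (hv₂ : ∀ᶠ s in 𝓝[>] 0,
      HasDerivAt (fun u => μ₂ u / u) ((g (s ^ p) (μ₂ s) - c * s ^ p) / s ^ 2) s)
    (hδ₁ : ∃ δ > (0 : ℝ), Tendsto (fun s => s ^ (-δ) * μ₁ s) (𝓝[>] 0) (𝓝 0))
    (hδ₂ : ∃ δ > (0 : ℝ), Tendsto (fun s => s ^ (-δ) * μ₂ s) (𝓝[>] 0) (𝓝 0))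
    (Φ : ℝ → ℝ) (hΦ : IsDifferenceRate p Φ) :
    ∃ β, (fun s => μ₁ s - μ₂ s - β * s) =O[𝓝[>] 0] fun s => s * Φ s := by
  obtain ⟨A, m, Φ', hA, hAm, hpm, hΦ', hmΦ, hΦ0⟩ := hΦ
  have hq : ∀ x ∈ Metric.closedBall (0 : ℝ × ℝ) r, ‖g x.1 x.2‖ ≤ K * ‖x‖ ^ 2 := fun x hx => by
    simpa [hg0, sq, mul_assoc] using hg x hx 0 (Metric.mem_closedBall_self hr.le)
  obtain ⟨δ₁, hδ₁, h₁⟩ := hδ₁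
  obtain ⟨δ₂, hδ₂, h₂⟩ := hδ₂
  have hs₁ := eventually_abs_le_rpow_of_tendsto h₁
  have hs₂ := eventually_abs_le_rpow_of_tendsto h₂
  exact exists_isBigO_sub_of_solutions hp hr hK hg hv₁ hv₂
    (squeeze_zero_norm' hs₁ (tendsto_rpow_nhdsGT_zero hδ₁))
    (squeeze_zero_norm' hs₂ (tendsto_rpow_nhdsGT_zero hδ₂))
    ((isBigO_mul_one_add_abs_of_solution hp hδ₁ hr hK hq hv₁ hs₁ hA).trans hAm)
    ((isBigO_mul_one_add_abs_of_solution hp hδ₂ hr hK hq hv₂ hs₂ hA).trans hAm) hpm hΦ' hmΦ hΦ0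

theorem unstable_manifold_solution_difference_general (n k ε : ℝ) (hn : n ∈ Set.Ioo (0 : ℝ) 3)
    (hε : 0 < ε)
    (g : ℝ → ℝ → ℝ) (U : Set (ℝ × ℝ)) (hU : U ∈ 𝓝 ((0, 0) : ℝ × ℝ))
    (hanal : ∀ x ∈ U, AnalyticAt ℝ (fun y : ℝ × ℝ => g y.1 y.2) x)
    (hg0 : g 0 0 = 0) (hg1 : pd1 g 0 0 = 0) (hg2 : pd2 g 0 0 = 0)
    (μ₁ μ₂ : ℝ → ℝ)
    (hμreg₁ : ContDiffOn ℝ 1 μ₁ (Set.Ioo 0 ε)) (hμreg₂ : ContDiffOn ℝ 1 μ₂ (Set.Ioo 0 ε))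
    (hode₁ : ∀ H ∈ Set.Ioo (0 : ℝ) ε,
      H * deriv μ₁ H - μ₁ H
        = g (H ^ (3 - n)) (μ₁ H) - 2 / (3 * k ^ 3 * (3 - n)) * H ^ (3 - n))
    (hode₂ : ∀ H ∈ Set.Ioo (0 : ℝ) ε,
      H * deriv μ₂ H - μ₂ H
        = g (H ^ (3 - n)) (μ₂ H) - 2 / (3 * k ^ 3 * (3 - n)) * H ^ (3 - n))
    (hδ₁ : ∃ δ > (0 : ℝ), Tendsto (fun H => H ^ (-δ) * μ₁ H) (𝓝[>] (0 : ℝ)) (𝓝 0))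
    (hδ₂ : ∃ δ > (0 : ℝ), Tendsto (fun H => H ^ (-δ) * μ₂ H) (𝓝[>] (0 : ℝ)) (𝓝 0)) :
    ∃ β : ℝ,
      (n < 2 →
        (fun H => μ₁ H - μ₂ H - β * H) =O[𝓝[>] (0 : ℝ)] fun H => H * H) ∧
      (n = 2 →
        (fun H => μ₁ H - μ₂ H - β * H) =O[𝓝[>] (0 : ℝ)]
          fun H => H * -(H * Real.log H)) ∧
      (2 < n →
        (fun H => μ₁ H - μ₂ H - β * H) =O[𝓝[>] (0 : ℝ)]
          fun H => H * H ^ (3 - n)) := by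
  have hp : 0 < 3 - n := by linarith [hn.2]
  have hG := hanal 0 (by rw [← Prod.mk_zero_zero]; exact mem_of_mem_nhds hU)
  obtain ⟨K, hK, r, hr, hg⟩ := exists_norm_sub_le_of_fderiv_eq_zero hG.contDiffAt
    (fderiv_uncurry_eq_zero hG.differentiableAt hg1 hg2)
  have key := exists_isBigO_sub_of_isDifferenceRate hp hr hK hg hg0
    (eventually_hasDerivAt_div_self hε hμreg₁ hode₁)
    (eventually_hasDerivAt_div_self hε hμreg₂ hode₂) hδ₁ hδ₂
  rcases lt_trichotomy n 2 with hn2 | rfl | hn2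
  · obtain ⟨β, hβ⟩ := key _ (isDifferenceRate_id (by linarith))
    exact ⟨β, fun _ => hβ, fun h => absurd h hn2.ne, fun h => absurd h hn2.not_gt⟩
  · obtain ⟨β, hβ⟩ := key _ (by norm_num; exact isDifferenceRate_mul_two_sub_log)
    exact ⟨β, fun h => absurd h (lt_irrefl 2),
      fun _ => hβ.trans ((isBigO_refl _ _).mul mul_two_sub_log_isBigO),
      fun h => absurd h (lt_irrefl 2)⟩
  · obtain ⟨β, hβ⟩ := key _ (isDifferenceRate_rpow_div hp (by linarith))
    refine ⟨β, fun h => absurd h hn2.not_gt, fun h => absurd h hn2.ne', fun _ => hβ.trans ?_⟩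
    exact (isBigO_refl _ _).mul ((isBigO_const_mul_self (3 - n)⁻¹ _ _).congr_left fun s => by ring)

/-- Two solutions `μ₁, μ₂` of the first-order ODE
`H·μ'(H) − μ(H) = g(H^{3−n}, μ(H)) − (2/(3k³(3−n)))·H^{3−n}` on the unstable manifold,
each with `H^{−δ}·μ_j(H) → 0` as `H ↓ 0` for some `δ > 0`, differ by
`μ₁ − μ₂ = βH·(1+O(H))` (`0 < n < 2`), `βH·(1+O(−H ln H))` (`n = 2`),
`βH·(1+O(H^{3−n}))` (`2 < n < 3`) as `H ↓ 0`, for some `β ∈ ℝ`. -/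
theorem unstable_manifold_solution_difference (n k ε : ℝ) (hn : n ∈ Set.Ioo (0 : ℝ) 3)
    (hk : 0 < k) (hε : 0 < ε)
    (g : ℝ → ℝ → ℝ) (U : Set (ℝ × ℝ)) (hU : U ∈ 𝓝 ((0, 0) : ℝ × ℝ))
    (hanal : ∀ x ∈ U, AnalyticAt ℝ (fun y : ℝ × ℝ => g y.1 y.2) x)
    (hg0 : g 0 0 = 0) (hg1 : pd1 g 0 0 = 0) (hg2 : pd2 g 0 0 = 0)
    (μ₁ μ₂ : ℝ → ℝ)
    (hμreg₁ : ContDiffOn ℝ 1 μ₁ (Set.Ioo 0 ε)) (hμreg₂ : ContDiffOn ℝ 1 μ₂ (Set.Ioo 0 ε))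
    (hdom₁ : ∀ H ∈ Set.Ioo (0 : ℝ) ε, (H ^ (3 - n), μ₁ H) ∈ U)
    (hdom₂ : ∀ H ∈ Set.Ioo (0 : ℝ) ε, (H ^ (3 - n), μ₂ H) ∈ U)
    (hode₁ : ∀ H ∈ Set.Ioo (0 : ℝ) ε,
      H * deriv μ₁ H - μ₁ H
        = g (H ^ (3 - n)) (μ₁ H) - 2 / (3 * k ^ 3 * (3 - n)) * H ^ (3 - n))
    (hode₂ : ∀ H ∈ Set.Ioo (0 : ℝ) ε,
      H * deriv μ₂ H - μ₂ H
        = g (H ^ (3 - n)) (μ₂ H) - 2 / (3 * k ^ 3 * (3 - n)) * H ^ (3 - n))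
    (hδ₁ : ∃ δ > (0 : ℝ), Tendsto (fun H => H ^ (-δ) * μ₁ H) (𝓝[>] (0 : ℝ)) (𝓝 0))
    (hδ₂ : ∃ δ > (0 : ℝ), Tendsto (fun H => H ^ (-δ) * μ₂ H) (𝓝[>] (0 : ℝ)) (𝓝 0)) :
    ∃ β : ℝ,
      (n < 2 →
        (fun H => μ₁ H - μ₂ H - β * H) =O[𝓝[>] (0 : ℝ)] fun H => H * H) ∧
      (n = 2 →
        (fun H => μ₁ H - μ₂ H - β * H) =O[𝓝[>] (0 : ℝ)]
          fun H => H * -(H * Real.log H)) ∧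
      (2 < n →
        (fun H => μ₁ H - μ₂ H - β * H) =O[𝓝[>] (0 : ℝ)]
          fun H => H * H ^ (3 - n)) :=
  unstable_manifold_solution_difference_general n k ε hn hε g U hU hanal hg0 hg1 hg2 μ₁ μ₂ hμreg₁
    hμreg₂ hode₁ hode₂ hδ₁ hδ₂
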